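/- Let A be a real n×m matrix (n ≤ m) with all columns nonzero and no two columns scalar multiples of each other, let v be a vertex of the zonotope Z(A), let γ denote the standard Gaussian measure on ℝ^n, and let x be a standard Gaussian vector on ℝ^n. Then the probability that x satisfies ⟨a_i, x⟩ ≠ 0 for all i and A·sign(Aᵀx) = v equals γ(N_{Z(A)}(v)). -/

import Mathlib

open Matrix MeasureTheory ProbabilityTheory

/-- The zonotope generated by the columns of an `n × m` real matrix `A`. -/
def zonotope {n m : ℕ} (A : Matrix (Fin n) (Fin m) ℝ) : Set (Fin n → ℝ) :=
  {v | ∃ x : Fin m → ℝ, (∀ i, x i ∈ Set.Icc (-1 : ℝ) 1) ∧ v = A.mulVec x}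

/-- The sign vector `sign(Aᵀ x) ∈ {-1,1}^m` (entries are `Real.sign ⟨aᵢ, x⟩`). -/
noncomputable def signVec {n m : ℕ} (A : Matrix (Fin n) (Fin m) ℝ) (x : Fin n → ℝ) :
    Fin m → ℝ :=
  fun i => Real.sign (Aᵀ.mulVec x i)

/-- The normal cone of a set `K ⊆ ℝⁿ` at a point `v`. -/
def normalCone {n : ℕ} (K : Set (Fin n → ℝ)) (v : Fin n → ℝ) : Set (Fin n → ℝ) :=
  {x | ∀ z ∈ K, x ⬝ᵥ (z - v) ≤ 0}

/-- The standard Gaussian measure on `ℝⁿ`. -/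
noncomputable def stdGaussianPi (n : ℕ) : Measure (Fin n → ℝ) :=
  Measure.pi fun _ => gaussianReal 0 1

/-! For `x` off the hyperplanes `aᵢ⊥`, the linear form `w ↦ ⟨x, A w⟩ = ⟨Aᵀ x, w⟩` has the unique
maximiser `sign(Aᵀ x)` on the cube `[-1, 1]^m`, so the face of `Z(A)` exposed by `x` is the single
point `A · sign(Aᵀ x)`: for such `x`, `x ∈ N(v)` iff `A · sign(Aᵀ x) = v`. The hyperplanes are
Gaussian-null since the Gaussian is absolutely continuous with respect to Lebesgue measure, so the
two events coincide almost surely. -/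

theorem Real.self_mul_sign (r : ℝ) : r * Real.sign r = |r| := by
  rcases lt_trichotomy r 0 with h | rfl | h
  · rw [Real.sign_of_neg h, abs_of_neg h, mul_neg_one]
  · simp
  · rw [Real.sign_of_pos h, abs_of_pos h, mul_one]

theorem Real.sign_mem_Icc (r : ℝ) : Real.sign r ∈ Set.Icc (-1 : ℝ) 1 := by
  rcases Real.sign_apply_eq r with h | h | h <;> simp [h]

theorem mul_le_abs_of_mem_Icc (c : ℝ) {w : ℝ} (hw : w ∈ Set.Icc (-1 : ℝ) 1) :
    c * w ≤ |c| :=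
  calc c * w ≤ |c * w| := le_abs_self _
    _ = |c| * |w| := abs_mul c w
    _ ≤ |c| := mul_le_of_le_one_right (abs_nonneg c) (abs_le.2 hw)

theorem mul_lt_abs_of_mem_Icc_of_ne_sign {c w : ℝ} (hc : c ≠ 0)
    (hw : w ∈ Set.Icc (-1 : ℝ) 1) (hne : w ≠ Real.sign c) : c * w < |c| := by
  refine (mul_le_abs_of_mem_Icc c hw).lt_of_ne fun h => hne (mul_left_cancel₀ hc ?_)
  rw [h, Real.self_mul_sign]

section

variable {ι : Type*} [Fintype ι]

theorem dotProduct_le_dotProduct_sign (c : ι → ℝ) {w : ι → ℝ}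
    (hw : ∀ i, w i ∈ Set.Icc (-1 : ℝ) 1) : c ⬝ᵥ w ≤ c ⬝ᵥ fun i => Real.sign (c i) :=
  Finset.sum_le_sum fun i _ =>
    (mul_le_abs_of_mem_Icc _ (hw i)).trans_eq (Real.self_mul_sign _).symm

theorem eq_sign_of_dotProduct_sign_le {c w : ι → ℝ} (hc : ∀ i, c i ≠ 0)
    (hw : ∀ i, w i ∈ Set.Icc (-1 : ℝ) 1) (hle : (c ⬝ᵥ fun i => Real.sign (c i)) ≤ c ⬝ᵥ w) :
    w = fun i => Real.sign (c i) := by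
  by_contra hne
  obtain ⟨i, hi⟩ := Function.ne_iff.1 hne
  refine hle.not_gt (Finset.sum_lt_sum (fun j _ => ?_) ⟨i, Finset.mem_univ i, ?_⟩)
  · exact (mul_le_abs_of_mem_Icc _ (hw j)).trans_eq (Real.self_mul_sign _).symm
  · exact (mul_lt_abs_of_mem_Icc_of_ne_sign (hc i) (hw i) hi).trans_eq
      (Real.self_mul_sign _).symm

theorem volume_setOf_dotProduct_eq_zero {a : ι → ℝ} (ha : a ≠ 0) :
    volume {x : ι → ℝ | a ⬝ᵥ x = 0} = 0 := by
  refine Measure.addHaar_submodule volume (LinearMap.ker (dotProductBilin ℝ ℝ a)) fun htop => ?_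
  have ha_mem : a ∈ LinearMap.ker (dotProductBilin ℝ ℝ a) := htop ▸ Submodule.mem_top
  exact ha (dotProduct_self_eq_zero.1 ha_mem)

end

theorem dotProduct_mulVec_sub_mulVec {R ι κ : Type*} [CommRing R] [Fintype ι] [Fintype κ]
    (A : Matrix ι κ R) (x : ι → R) (w w' : κ → R) :
    x ⬝ᵥ (A *ᵥ w - A *ᵥ w') = Aᵀ *ᵥ x ⬝ᵥ w - Aᵀ *ᵥ x ⬝ᵥ w' := by
  rw [← mulVec_sub, dotProduct_mulVec, ← mulVec_transpose, dotProduct_sub]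

theorem MeasureTheory.Measure.pi_absolutelyContinuous_pi {n : ℕ} {α : Fin n → Type*}
    [∀ i, MeasurableSpace (α i)] {μ ν : ∀ i, Measure (α i)} [∀ i, SigmaFinite (μ i)]
    [∀ i, SigmaFinite (ν i)] (h : ∀ i, μ i ≪ ν i) : Measure.pi μ ≪ Measure.pi ν := by
  induction n with
  | zero => rw [Measure.pi_of_empty μ, Measure.pi_of_empty ν]
  | succ n ih =>
    rw [← (measurePreserving_piFinSuccAbove μ 0).symm.map_eq,
      ← (measurePreserving_piFinSuccAbove ν 0).symm.map_eq]
    exact ((h 0).prod (ih fun i => h _)).map (MeasurableEquiv.measurable _)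

theorem stdGaussianPi_absolutelyContinuous (n : ℕ) : stdGaussianPi n ≪ volume :=
  Measure.pi_absolutelyContinuous_pi fun _ => gaussianReal_absolutelyContinuous 0 one_ne_zero

theorem ae_stdGaussianPi_dotProduct_ne_zero {n : ℕ} {a : Fin n → ℝ} (ha : a ≠ 0) :
    ∀ᵐ x ∂stdGaussianPi n, a ⬝ᵥ x ≠ 0 := by
  rw [ae_iff]
  simpa only [ne_eq, not_not] using
    stdGaussianPi_absolutelyContinuous n (volume_setOf_dotProduct_eq_zero ha)

section

variable {n m : ℕ}

theorem mulVec_signVec_mem_zonotope (A : Matrix (Fin n) (Fin m) ℝ) (x : Fin n → ℝ) :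
    A *ᵥ signVec A x ∈ zonotope A :=
  ⟨signVec A x, fun _ => Real.sign_mem_Icc _, rfl⟩

theorem mem_normalCone_zonotope_iff {A : Matrix (Fin n) (Fin m) ℝ} {x v : Fin n → ℝ}
    (hx : ∀ i, (Aᵀ *ᵥ x) i ≠ 0) (hv : v ∈ zonotope A) :
    x ∈ normalCone (zonotope A) v ↔ A *ᵥ signVec A x = v := by
  constructor
  · intro hxv
    obtain ⟨ε, hε, rfl⟩ := hv
    have hle := hxv _ (mulVec_signVec_mem_zonotope A x)
    rw [dotProduct_mulVec_sub_mulVec, sub_nonpos] at hle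
    rw [eq_sign_of_dotProduct_sign_le hx hε hle]
    rfl
  · rintro rfl z ⟨w, hw, rfl⟩
    rw [dotProduct_mulVec_sub_mulVec, sub_nonpos]
    exact dotProduct_le_dotProduct_sign _ hw

end

theorem prob_maps_to_vertex_general (n m : ℕ)
    (A : Matrix (Fin n) (Fin m) ℝ)
    (hcol : ∀ i, (fun j => A j i) ≠ 0)
    (v : Fin n → ℝ) (hv : v ∈ (zonotope A).extremePoints ℝ) :
    stdGaussianPi n
        {x | (∀ i, Aᵀ.mulVec x i ≠ 0) ∧ A.mulVec (signVec A x) = v} =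
      stdGaussianPi n (normalCone (zonotope A) v) := by
  have hgeneric : ∀ᵐ x ∂stdGaussianPi n, ∀ i, (Aᵀ *ᵥ x) i ≠ 0 :=
    ae_all_iff.2 fun i => ae_stdGaussianPi_dotProduct_ne_zero (hcol i)
  refine measure_congr (Filter.eventuallyEq_set.2 ?_)
  filter_upwards [hgeneric] with x hx
  exact (and_iff_right hx).trans (mem_normalCone_zonotope_iff hx hv.1).symm

/-- For a vertex `v` of the zonotope `Z(A)` and a standard Gaussian vector `x`, the
probability that `⟨aᵢ, x⟩ ≠ 0` for all `i` and `A · sign(Aᵀ x) = v` equals the Gaussian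
measure of the normal cone of `Z(A)` at `v`. -/
theorem prob_maps_to_vertex (n m : ℕ) (hnm : n ≤ m)
    (A : Matrix (Fin n) (Fin m) ℝ)
    (hcol : ∀ i, (fun j => A j i) ≠ 0)
    (hpair : ∀ i i', i ≠ i' → ∀ c : ℝ, (fun j => A j i) ≠ c • fun j => A j i')
    (v : Fin n → ℝ) (hv : v ∈ (zonotope A).extremePoints ℝ) :
    stdGaussianPi n
        {x | (∀ i, Aᵀ.mulVec x i ≠ 0) ∧ A.mulVec (signVec A x) = v} =
      stdGaussianPi n (normalCone (zonotope A) v) :=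
  prob_maps_to_vertex_general n m A hcol v hv
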